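/- Let R be a ring with largest strong left denominator set T_l(R), strong left localization radical l^s_R = ass(T_l(R)), largest strong left quotient ring Q_l^s(R) = T_l(R)⁻¹R, and left localization radical l_R = ⋂_{S ∈ max.Den_l(R)} ass(S). Then the kernel of the canonical ring homomorphism σ^s : Q_l^s(R) → ∏_{S ∈ max.Den_l(R)} S⁻¹R, s⁻¹r ↦ (s⁻¹r)_S, equals T_l(R)⁻¹ l_R = { s⁻¹r | s ∈ T_l(R), r ∈ l_R }. -/
import Mathlib


/-- A left Ore set in a ring `R`: a multiplicative subset (`1 ∈ S`, `0 ∉ S`,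
closed under multiplication) satisfying the left Ore condition. -/
def IsLeftOreSet (R : Type*) [Ring R] (S : Set R) : Prop :=
  (1 : R) ∈ S ∧ (0 : R) ∉ S ∧ (∀ s ∈ S, ∀ t ∈ S, s * t ∈ S) ∧
    ∀ (r : R), ∀ s ∈ S, ∃ s' ∈ S, ∃ r' : R, s' * r = r' * s

/-- A left denominator set: a left Ore set such that `r * s = 0` implies
`t * r = 0` for some `t ∈ S`. -/
def IsLeftDenSet (R : Type*) [Ring R] (S : Set R) : Prop :=
  IsLeftOreSet R S ∧ ∀ (r : R), ∀ s ∈ S, r * s = 0 → ∃ t ∈ S, t * r = 0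

/-- `ass(S) = {r ∈ R | s r = 0 for some s ∈ S}`. -/
def assSet (R : Type*) [Ring R] (S : Set R) : Set R :=
  {r : R | ∃ s ∈ S, s * r = 0}

/-- A maximal left denominator set of `R`. -/
def IsMaxLeftDenSet (R : Type*) [Ring R] (S : Set R) : Prop :=
  IsLeftDenSet R S ∧ ∀ T : Set R, IsLeftDenSet R T → S ⊆ T → T = S

/-- The set `L^s_l(R)` of strongly left localizable elements: the intersection of
all maximal left denominator sets of `R`. -/
def stronglyLocalizable (R : Type*) [Ring R] : Set R :=
  {r : R | ∀ S : Set R, IsMaxLeftDenSet R S → r ∈ S}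

/-- `T_l(R)`: the union of all left denominator sets contained in `L^s_l(R)`
(the largest strong left denominator set). -/
def Tl (R : Type*) [Ring R] : Set R :=
  ⋃₀ {S : Set R | IsLeftDenSet R S ∧ S ⊆ stronglyLocalizable R}

/-- The left localization radical `l_R = ⋂_{S ∈ max.Den_l(R)} ass(S)`. -/
def lRad (R : Type*) [Ring R] : Set R :=
  {r : R | ∀ S : Set R, IsMaxLeftDenSet R S → r ∈ assSet R S}

/-- `f : R →+* Q` is a left Ore localization of `R` at `S`: elements of `S` become
units, every element of `Q` is of the form `s⁻¹ r`, and `ker f = ass(S)`. -/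
def IsLeftLocalization (R : Type*) [Ring R] {Q : Type*} [Ring Q]
    (S : Set R) (f : R →+* Q) : Prop :=
  (∀ s ∈ S, IsUnit (f s)) ∧
  (∀ q : Q, ∃ s ∈ S, ∃ r : R, ∃ u : Qˣ, (u : Q) = f s ∧ q = (↑u⁻¹ : Q) * f r) ∧
  (∀ r : R, f r = 0 ↔ r ∈ assSet R S)

theorem stmt19.{u} (R : Type u) [Ring R]
    (QT : Type u) [Ring QT] (fT : R →+* QT)
    (hfT : IsLeftLocalization R (Tl R) fT)
    (Q : {S : Set R // IsMaxLeftDenSet R S} → Type u) [∀ S, Ring (Q S)]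
    (g : ∀ S, R →+* Q S) (hg : ∀ S, IsLeftLocalization R S.1 (g S))
    (h : ∀ S, QT →+* Q S) (hh : ∀ S, (h S).comp fT = g S) :
    {q : QT | ∀ S, h S q = 0} =
      {q : QT | ∃ t ∈ Tl R, ∃ r ∈ lRad R,
        ∃ u : QTˣ, (u : QT) = fT t ∧ q = (↑u⁻¹ : QT) * fT r} := by
  ext q
  simp only [Set.mem_setOf_eq]
  have key : ∀ (S : {S : Set R // IsMaxLeftDenSet R S}) (u : QTˣ) (r : R),
      h S ((↑u⁻¹ : QT) * fT r) = 0 ↔ r ∈ assSet R S.1 := by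
    intro S u r
    have hgr : (h S) (fT r) = g S r := by rw [← hh S]; rfl
    rw [map_mul, hgr]
    constructor
    · intro h0
      have h1 := congrArg (fun x => (h S) (↑u : QT) * x) h0
      simp only [mul_zero, ← mul_assoc, ← map_mul, Units.mul_inv, map_one, one_mul] at h1
      exact ((hg S).2.2 r).mp h1
    · intro hr
      rw [((hg S).2.2 r).mpr hr, mul_zero]
  constructor
  · intro hq
    obtain ⟨t, ht, r, u, hu, hq'⟩ := hfT.2.1 q
    refine ⟨t, ht, r, ?_, u, hu, hq'⟩
    intro S hS
    exact (key ⟨S, hS⟩ u r).mp (hq' ▸ hq ⟨S, hS⟩)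
  · rintro ⟨t, ht, r, hr, u, hu, rfl⟩ S
    exact (key S u r).mpr (hr S.1 S.2)
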